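/- arXiv:2504.07076 — 5 statements merged into one kernel-verified Lean document; each statement's English description precedes it below -/
import Mathlib

section
/- Let A be an invertible n×n matrix over a commutative ring (or field), let r ≤ n, let u = (n−r+1,…,n) and v = (1,…,r) be sets of row and column indices respectively, and let ũ, ṽ be their complements in (1,…,n). Then det(A) · det((A⁻¹)^ṽ_ũ) = (−1)^{r(n+1)} · det(A^u_v), where A^u_v denotes the (n−r)×(n−r) matrix obtained from A by deleting the rows with indices in u and the columns with indices in v, and (A⁻¹)^ṽ_ũ denotes the r×r matrix obtained from A⁻¹ by deleting the rows with indices in ũ and the columns with indices in ṽ (equivalently, the submatrix of A⁻¹ with rows 1,…,r and columns n−r+1,…,n). -/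
open Matrix Equiv

private lemma finRotate_pow_val (m r : ℕ) (x : Fin (m + 1)) :
    (((finRotate (m + 1)) ^ r) x).val = (x.val + r) % (m + 1) := by
  induction r generalizing x with
  | zero => simp [Nat.mod_eq_of_lt x.isLt]
  | succ r ih =>
    rw [pow_succ', Equiv.Perm.mul_apply, finRotate_succ_apply]
    have h1 : ∀ y : Fin (m + 1), ((y + 1 : Fin (m + 1))).val = (y.val + 1 % (m + 1)) % (m + 1) :=
      fun y => by rw [Fin.add_def, Fin.val_one']
    rw [h1, ih, Nat.mod_add_mod, Nat.add_mod_mod, ← Nat.add_assoc]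

private lemma sign_eq_of_val (n r : ℕ) (hr : r ≤ n) (ρ : Equiv.Perm (Fin n))
    (hρ : ∀ x : Fin n, (ρ x).val = (x.val + r) % n) :
    Equiv.Perm.sign ρ = (-1) ^ (r * (n + 1)) := by
  cases n with
  | zero =>
    have : r = 0 := Nat.le_zero.mp hr
    subst this
    have : ρ = 1 := Subsingleton.elim _ _
    simp [this]
  | succ m =>
    have hρ' : ρ = (finRotate (m + 1)) ^ r := by
      apply Equiv.ext; intro x; apply Fin.ext; rw [hρ, finRotate_pow_val]
    rw [hρ', map_pow, sign_finRotate, ← pow_mul]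
    have h2 : r * (m + 1 + 1) = m * r + 2 * r := by ring
    rw [h2, pow_add, two_mul, pow_add]
    simp

/-- The Jacobi complementary minor identity:
`det A * det ((A⁻¹) rows 1..r, cols n-r+1..n) = (-1)^(r(n+1)) * det (A rows 1..n-r, cols r+1..n)`. -/
theorem jacobi_complementary_minor {k : Type*} [Field k] {n r : ℕ} (hr : r ≤ n)
    (A : Matrix (Fin n) (Fin n) k) (hA : IsUnit A.det) :
    A.det * ((A⁻¹).submatrix
        (fun i : Fin r => (⟨(i : ℕ), by have := i.isLt; omega⟩ : Fin n))
        (fun j : Fin r => (⟨n - r + (j : ℕ), by have := j.isLt; omega⟩ : Fin n))).det =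
    (-1 : k) ^ (r * (n + 1)) *
      (A.submatrix
        (fun i : Fin (n - r) => (⟨(i : ℕ), by have := i.isLt; omega⟩ : Fin n))
        (fun j : Fin (n - r) => (⟨r + (j : ℕ), by have := j.isLt; omega⟩ : Fin n))).det := by
  have hn' : n - r + r = n := by omega
  have hn'' : r + (n - r) = n := by omega
  set e₁ : Fin (n - r) ⊕ Fin r ≃ Fin n := finSumFinEquiv.trans (finCongr hn') with he₁
  set e₂ : Fin r ⊕ Fin (n - r) ≃ Fin n := finSumFinEquiv.trans (finCongr hn'') with he₂
  set s : Fin (n - r) ⊕ Fin r ≃ Fin r ⊕ Fin (n - r) := Equiv.sumComm _ _ with hs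
  set B := A⁻¹ with hB
  set C := A.submatrix e₁ e₂ with hC
  set D := B.submatrix e₂ e₁ with hD
  have hCD : C * D = 1 := by
    rw [hC, hD, Matrix.submatrix_mul_equiv, hB, Matrix.mul_nonsing_inv A hA,
      Matrix.submatrix_one_equiv]
  have hCD' : Matrix.fromBlocks
      (C.toBlocks₁₁ * D.toBlocks₁₁ + C.toBlocks₁₂ * D.toBlocks₂₁)
      (C.toBlocks₁₁ * D.toBlocks₁₂ + C.toBlocks₁₂ * D.toBlocks₂₂)
      (C.toBlocks₂₁ * D.toBlocks₁₁ + C.toBlocks₂₂ * D.toBlocks₂₁)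
      (C.toBlocks₂₁ * D.toBlocks₁₂ + C.toBlocks₂₂ * D.toBlocks₂₂)
      = Matrix.fromBlocks 1 0 0 1 := by
    rw [← Matrix.fromBlocks_multiply, Matrix.fromBlocks_toBlocks,
      Matrix.fromBlocks_toBlocks, Matrix.fromBlocks_one, hCD]
  have h12 : C.toBlocks₁₁ * D.toBlocks₁₂ + C.toBlocks₁₂ * D.toBlocks₂₂ = 0 := by
    have := congrArg Matrix.toBlocks₁₂ hCD'
    simpa only [Matrix.toBlocks_fromBlocks₁₂] using this
  have h22 : C.toBlocks₂₁ * D.toBlocks₁₂ + C.toBlocks₂₂ * D.toBlocks₂₂ = 1 := by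
    have := congrArg Matrix.toBlocks₂₂ hCD'
    simpa only [Matrix.toBlocks_fromBlocks₂₂] using this
  set M := Matrix.fromBlocks D.toBlocks₁₂ (0 : Matrix (Fin r) (Fin (n - r)) k) D.toBlocks₂₂ (1 : Matrix (Fin (n - r)) (Fin (n - r)) k) with hM
  have hCM : C * M = Matrix.fromBlocks 0 C.toBlocks₁₂ 1 C.toBlocks₂₂ := by
    conv_lhs => rw [← Matrix.fromBlocks_toBlocks C, hM, Matrix.fromBlocks_multiply]
    rw [h12, h22]
    simp
  have hdetM : (M.submatrix s s).det = (D.toBlocks₁₂).det := by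
    have h : M.submatrix s s = Matrix.fromBlocks 1 D.toBlocks₂₂ 0 D.toBlocks₁₂ := by
      rw [hM]
      exact Matrix.fromBlocks_submatrix_sum_swap_sum_swap _ _ _ _
    rw [h, Matrix.det_fromBlocks_zero₂₁, Matrix.det_one, one_mul]
  have hdetCM : ((C * M).submatrix id s).det = (C.toBlocks₁₂).det := by
    rw [hCM]
    have h : (Matrix.fromBlocks 0 C.toBlocks₁₂ 1 C.toBlocks₂₂).submatrix id s
        = Matrix.fromBlocks C.toBlocks₁₂ 0 C.toBlocks₂₂ 1 := by
      ext (i | i) (j | j) <;> rfl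
    rw [h, Matrix.det_fromBlocks_zero₁₂, Matrix.det_one, mul_one]
  have hmul : (C.submatrix id s) * (M.submatrix s s) = (C * M).submatrix id s :=
    Matrix.submatrix_mul_equiv C M id s s
  set g : Equiv.Perm (Fin (n - r) ⊕ Fin r) := (s.trans e₂).trans e₁.symm with hg
  have hC' : C.submatrix id s = (A.submatrix e₁ e₁).submatrix id g := by
    ext i j
    simp [hC, hg, Matrix.submatrix_apply]
  have hdetC' : (C.submatrix id s).det = (Equiv.Perm.sign g : k) * A.det := by
    rw [hC', Matrix.det_permute', Matrix.det_submatrix_equiv_self]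
  have key0 : ∀ y : Fin (n - r) ⊕ Fin r, (e₂ (s y)).val = ((e₁ y).val + r) % n := by
    rintro (a | b)
    · have h1 : (e₂ (s (Sum.inl a))).val = r + a.val := by simp [hs, he₂]
      have h2 : (e₁ (Sum.inl a)).val = a.val := by simp [he₁]
      rw [h1, h2, Nat.mod_eq_of_lt (by have := a.isLt; omega)]
      omega
    · have h1 : (e₂ (s (Sum.inr b))).val = b.val := by simp [hs, he₂]
      have h2 : (e₁ (Sum.inr b)).val = n - r + b.val := by simp [he₁]
      rw [h1, h2, show n - r + b.val + r = b.val + n by omega,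
        Nat.add_mod_right, Nat.mod_eq_of_lt (by have := b.isLt; omega)]
  have hρval : ∀ x : Fin n, ((e₁.permCongr g) x).val = (x.val + r) % n := by
    intro x
    have hperm : (e₁.permCongr g) x = e₂ (s (e₁.symm x)) := by
      simp [Equiv.permCongr_apply, hg]
    rw [hperm]
    have := key0 (e₁.symm x)
    rwa [Equiv.apply_symm_apply] at this
  have hsign : Equiv.Perm.sign g = (-1 : ℤˣ) ^ (r * (n + 1)) := by
    rw [← Equiv.Perm.sign_permCongr e₁ g]
    exact sign_eq_of_val n r hr _ hρval
  have hsignk : ((Equiv.Perm.sign g : ℤ) : k) = (-1 : k) ^ (r * (n + 1)) := by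
    rw [hsign]; push_cast; ring
  have hBt : (A⁻¹).submatrix
      (fun i : Fin r => (⟨(i : ℕ), by have := i.isLt; omega⟩ : Fin n))
      (fun j : Fin r => (⟨n - r + (j : ℕ), by have := j.isLt; omega⟩ : Fin n))
      = D.toBlocks₁₂ := by
    ext i j
    simp only [Matrix.toBlocks₁₂, Matrix.submatrix_apply, Matrix.of_apply, hD, hB]
    congr 1 <;> apply Fin.ext <;> simp [he₂, he₁]
  have hAt : A.submatrix
      (fun i : Fin (n - r) => (⟨(i : ℕ), by have := i.isLt; omega⟩ : Fin n))
      (fun j : Fin (n - r) => (⟨r + (j : ℕ), by have := j.isLt; omega⟩ : Fin n))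
      = C.toBlocks₁₂ := by
    ext i j
    simp only [Matrix.toBlocks₁₂, Matrix.submatrix_apply, Matrix.of_apply, hC]
    congr 1 <;> apply Fin.ext <;> simp [he₂, he₁]
  rw [hBt, hAt]
  have key : (-1 : k) ^ (r * (n + 1)) * A.det * (D.toBlocks₁₂).det
      = (C.toBlocks₁₂).det := by
    have hh := congrArg Matrix.det hmul
    rw [Matrix.det_mul, hdetM, hdetCM, hdetC', hsignk] at hh
    linear_combination hh
  have hone : (-1 : k) ^ (r * (n + 1)) * (-1 : k) ^ (r * (n + 1)) = 1 := by
    rw [← pow_add, ← two_mul, pow_mul]; norm_num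
  calc A.det * (D.toBlocks₁₂).det
      = ((-1 : k) ^ (r * (n + 1)) * (-1 : k) ^ (r * (n + 1))) * (A.det * (D.toBlocks₁₂).det) := by
        rw [hone, one_mul]
    _ = (-1 : k) ^ (r * (n + 1)) * ((-1 : k) ^ (r * (n + 1)) * A.det * (D.toBlocks₁₂).det) := by
        ring
    _ = (-1 : k) ^ (r * (n + 1)) * (C.toBlocks₁₂).det := by rw [key]
end

section
/- Let M be an r×p matrix over a field with r ≤ p. For column multi-indices, let X_{i₁⋯i_r} denote the determinant of the r×r submatrix of M formed by columns (i₁,…,i_r). Then for any indices i₁,…,i_r and j₁,…,j_r from {1,…,p}: X_{i₁⋯i_r} · X_{j₁⋯j_r} = Σ_{t=1}^{r} X_{j_t i₂⋯i_r} · X_{j₁⋯j_{t−1} i₁ j_{t+1}⋯j_r}. -/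
/-- Determinant is additive over finite sums in a fixed column. -/
lemma det_updateColumn_finsetSum {n R ι : Type*} [DecidableEq n] [Fintype n] [CommRing R]
    (A : Matrix n n R) (c : n) (s : Finset ι) (u : ι → n → R) :
    (A.updateCol c (∑ t ∈ s, u t)).det = ∑ t ∈ s, (A.updateCol c (u t)).det := by
  induction s using Finset.cons_induction with
  | empty =>
      rw [Finset.sum_empty, Finset.sum_empty,
        show (0 : n → R) = (0 : R) • (0 : n → R) from (zero_smul _ _).symm,
        Matrix.det_updateCol_smul, zero_mul]
  | cons a s ha ih =>
      rw [Finset.sum_cons, Matrix.det_updateCol_add, ih, Finset.sum_cons]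

/-- The Plücker relations in exchange form for maximal minors of an `r × p` matrix. -/
theorem pluecker_exchange {k : Type*} [Field k] {r p : ℕ} (hr : 0 < r) (hrp : r ≤ p)
    (M : Matrix (Fin r) (Fin p) k) (i j : Fin r → Fin p) :
    (M.submatrix id i).det * (M.submatrix id j).det =
      ∑ t : Fin r,
        (M.submatrix id (Function.update i ⟨0, hr⟩ (j t))).det *
          (M.submatrix id (Function.update j t (i ⟨0, hr⟩))).det := by
  set z : Fin r := ⟨0, hr⟩ with hz
  set W : Matrix (Fin r) (Fin r) k := M.submatrix id j with hW
  set v : Fin r → k := fun a => M a (i z) with hv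
  -- submatrix with an updated column index = updateColumn of the submatrix
  have hsubj : ∀ (t : Fin r) (c : Fin p),
      M.submatrix id (Function.update j t c) = W.updateCol t (fun a => M a c) := by
    intro t c
    ext a b
    simp [Matrix.updateCol_apply, Function.update_apply, hW]
    by_cases h : b = t <;> simp [h]
  have hsubi : ∀ (c : Fin p),
      M.submatrix id (Function.update i z c)
        = (M.submatrix id i).updateCol z (fun a => M a c) := by
    intro c
    ext a b
    simp [Matrix.updateCol_apply, Function.update_apply]
    by_cases h : b = z <;> simp [h]
  -- column `z` of `M.submatrix id i` is `v`
  have hself : (M.submatrix id i).updateCol z v = M.submatrix id i := by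
    have := (hsubi (i z)).symm
    rwa [Function.update_eq_self] at this
  -- Cramer's rule
  have hC : W.det • v = ∑ t : Fin r, (Matrix.cramer W v t) • (fun a => W a t) := by
    rw [← Matrix.mulVec_cramer W v]
    ext a
    simp [Matrix.mulVec, dotProduct, Finset.sum_apply, mul_comm]
  calc (M.submatrix id i).det * W.det
      = W.det * ((M.submatrix id i).updateCol z v).det := by
        rw [hself]; ring
    _ = ((M.submatrix id i).updateCol z (W.det • v)).det := by
        rw [Matrix.det_updateCol_smul]
    _ = ∑ t : Fin r, ((M.submatrix id i).updateCol z
          ((Matrix.cramer W v t) • (fun a => W a t))).det := by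
        rw [hC, det_updateColumn_finsetSum]
    _ = ∑ t : Fin r, (Matrix.cramer W v t) *
          ((M.submatrix id i).updateCol z (fun a => W a t)).det := by
        simp [Matrix.det_updateCol_smul]
    _ = ∑ t : Fin r,
        (M.submatrix id (Function.update i ⟨0, hr⟩ (j t))).det *
          (M.submatrix id (Function.update j t (i ⟨0, hr⟩))).det := by
        refine Finset.sum_congr rfl fun t _ => ?_
        rw [Matrix.cramer_apply, ← hsubj t (i z), ← hz]
        have : (fun a => W a t) = fun a => M a (j t) := by
          ext a; simp [hW]
        rw [this, ← hsubi (j t)]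
        ring
end

section
/- Let A be a commutative superalgebra and let M, N be two 1|1 supermatrices with even invertible diagonal entries and odd off-diagonal entries, writing M = [[a, α],[β, b]], N = [[c, γ],[δ, d]]. Define Ber([[x, ξ],[η, y]]) = (x − ξ y⁻¹ η) y⁻¹. Then Ber(MN) = Ber(M) · Ber(N), provided the product MN also has invertible diagonal entries. -/
/-- Multiplicativity of the Berezinian for `1|1` supermatrices:
`Ber(MN) = Ber(M)·Ber(N)`, where `M = [[a,α],[β,b]]`, `N = [[c,γ],[δ,d]]`. -/
theorem ber_mul_11 {A : Type*} [Ring A] (a b c d α β γ δ : A)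
    [Invertible a] [Invertible b] [Invertible c] [Invertible d]
    (haC : ∀ x : A, Commute a x) (hbC : ∀ x : A, Commute b x)
    (hcC : ∀ x : A, Commute c x) (hdC : ∀ x : A, Commute d x)
    (hα : α * α = 0) (hβ : β * β = 0) (hγ : γ * γ = 0) (hδ : δ * δ = 0)
    (hαβ : α * β = -(β * α)) (hαγ : α * γ = -(γ * α)) (hαδ : α * δ = -(δ * α))
    (hβγ : β * γ = -(γ * β)) (hβδ : β * δ = -(δ * β)) (hγδ : γ * δ = -(δ * γ))
    (hu : IsUnit (a * c + α * δ)) (hv : IsUnit (β * γ + b * d)) :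
    (a * c + α * δ - (a * γ + α * d) * Ring.inverse (β * γ + b * d) * (β * c + b * δ)) *
        Ring.inverse (β * γ + b * d) =
      ((a - α * ⅟b * β) * ⅟b) * ((c - γ * ⅟d * δ) * ⅟d) := by
  have hibC : ∀ x : A, Commute (⅟b) x := fun x => (hbC x).invOf_left
  have hidC : ∀ x : A, Commute (⅟d) x := fun x => (hdC x).invOf_left
  have c_b_a : b * a = a * b := ((haC b).symm)
  have c_b_a' : ∀ x : A, b * (a * x) = a * (b * x) := fun x => by rw [← mul_assoc, c_b_a, mul_assoc]
  have c_ib_a : ⅟b * a = a * ⅟b := ((haC ⅟b).symm)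
  have c_ib_a' : ∀ x : A, ⅟b * (a * x) = a * (⅟b * x) := fun x => by rw [← mul_assoc, c_ib_a, mul_assoc]
  have c_c_a : c * a = a * c := ((haC c).symm)
  have c_c_a' : ∀ x : A, c * (a * x) = a * (c * x) := fun x => by rw [← mul_assoc, c_c_a, mul_assoc]
  have c_d_a : d * a = a * d := ((haC d).symm)
  have c_d_a' : ∀ x : A, d * (a * x) = a * (d * x) := fun x => by rw [← mul_assoc, c_d_a, mul_assoc]
  have c_id_a : ⅟d * a = a * ⅟d := ((haC ⅟d).symm)
  have c_id_a' : ∀ x : A, ⅟d * (a * x) = a * (⅟d * x) := fun x => by rw [← mul_assoc, c_id_a, mul_assoc]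
  have c_al_a : α * a = a * α := ((haC α).symm)
  have c_al_a' : ∀ x : A, α * (a * x) = a * (α * x) := fun x => by rw [← mul_assoc, c_al_a, mul_assoc]
  have c_be_a : β * a = a * β := ((haC β).symm)
  have c_be_a' : ∀ x : A, β * (a * x) = a * (β * x) := fun x => by rw [← mul_assoc, c_be_a, mul_assoc]
  have c_ga_a : γ * a = a * γ := ((haC γ).symm)
  have c_ga_a' : ∀ x : A, γ * (a * x) = a * (γ * x) := fun x => by rw [← mul_assoc, c_ga_a, mul_assoc]
  have c_de_a : δ * a = a * δ := ((haC δ).symm)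
  have c_de_a' : ∀ x : A, δ * (a * x) = a * (δ * x) := fun x => by rw [← mul_assoc, c_de_a, mul_assoc]
  have c_ib_b : ⅟b * b = b * ⅟b := ((hbC ⅟b).symm)
  have c_ib_b' : ∀ x : A, ⅟b * (b * x) = b * (⅟b * x) := fun x => by rw [← mul_assoc, c_ib_b, mul_assoc]
  have c_c_b : c * b = b * c := ((hbC c).symm)
  have c_c_b' : ∀ x : A, c * (b * x) = b * (c * x) := fun x => by rw [← mul_assoc, c_c_b, mul_assoc]
  have c_d_b : d * b = b * d := ((hbC d).symm)
  have c_d_b' : ∀ x : A, d * (b * x) = b * (d * x) := fun x => by rw [← mul_assoc, c_d_b, mul_assoc]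
  have c_id_b : ⅟d * b = b * ⅟d := ((hbC ⅟d).symm)
  have c_id_b' : ∀ x : A, ⅟d * (b * x) = b * (⅟d * x) := fun x => by rw [← mul_assoc, c_id_b, mul_assoc]
  have c_al_b : α * b = b * α := ((hbC α).symm)
  have c_al_b' : ∀ x : A, α * (b * x) = b * (α * x) := fun x => by rw [← mul_assoc, c_al_b, mul_assoc]
  have c_be_b : β * b = b * β := ((hbC β).symm)
  have c_be_b' : ∀ x : A, β * (b * x) = b * (β * x) := fun x => by rw [← mul_assoc, c_be_b, mul_assoc]
  have c_ga_b : γ * b = b * γ := ((hbC γ).symm)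
  have c_ga_b' : ∀ x : A, γ * (b * x) = b * (γ * x) := fun x => by rw [← mul_assoc, c_ga_b, mul_assoc]
  have c_de_b : δ * b = b * δ := ((hbC δ).symm)
  have c_de_b' : ∀ x : A, δ * (b * x) = b * (δ * x) := fun x => by rw [← mul_assoc, c_de_b, mul_assoc]
  have c_c_ib : c * ⅟b = ⅟b * c := ((hibC c).symm)
  have c_c_ib' : ∀ x : A, c * (⅟b * x) = ⅟b * (c * x) := fun x => by rw [← mul_assoc, c_c_ib, mul_assoc]
  have c_d_ib : d * ⅟b = ⅟b * d := ((hibC d).symm)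
  have c_d_ib' : ∀ x : A, d * (⅟b * x) = ⅟b * (d * x) := fun x => by rw [← mul_assoc, c_d_ib, mul_assoc]
  have c_id_ib : ⅟d * ⅟b = ⅟b * ⅟d := ((hibC ⅟d).symm)
  have c_id_ib' : ∀ x : A, ⅟d * (⅟b * x) = ⅟b * (⅟d * x) := fun x => by rw [← mul_assoc, c_id_ib, mul_assoc]
  have c_al_ib : α * ⅟b = ⅟b * α := ((hibC α).symm)
  have c_al_ib' : ∀ x : A, α * (⅟b * x) = ⅟b * (α * x) := fun x => by rw [← mul_assoc, c_al_ib, mul_assoc]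
  have c_be_ib : β * ⅟b = ⅟b * β := ((hibC β).symm)
  have c_be_ib' : ∀ x : A, β * (⅟b * x) = ⅟b * (β * x) := fun x => by rw [← mul_assoc, c_be_ib, mul_assoc]
  have c_ga_ib : γ * ⅟b = ⅟b * γ := ((hibC γ).symm)
  have c_ga_ib' : ∀ x : A, γ * (⅟b * x) = ⅟b * (γ * x) := fun x => by rw [← mul_assoc, c_ga_ib, mul_assoc]
  have c_de_ib : δ * ⅟b = ⅟b * δ := ((hibC δ).symm)
  have c_de_ib' : ∀ x : A, δ * (⅟b * x) = ⅟b * (δ * x) := fun x => by rw [← mul_assoc, c_de_ib, mul_assoc]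
  have c_d_c : d * c = c * d := ((hcC d).symm)
  have c_d_c' : ∀ x : A, d * (c * x) = c * (d * x) := fun x => by rw [← mul_assoc, c_d_c, mul_assoc]
  have c_id_c : ⅟d * c = c * ⅟d := ((hcC ⅟d).symm)
  have c_id_c' : ∀ x : A, ⅟d * (c * x) = c * (⅟d * x) := fun x => by rw [← mul_assoc, c_id_c, mul_assoc]
  have c_al_c : α * c = c * α := ((hcC α).symm)
  have c_al_c' : ∀ x : A, α * (c * x) = c * (α * x) := fun x => by rw [← mul_assoc, c_al_c, mul_assoc]
  have c_be_c : β * c = c * β := ((hcC β).symm)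
  have c_be_c' : ∀ x : A, β * (c * x) = c * (β * x) := fun x => by rw [← mul_assoc, c_be_c, mul_assoc]
  have c_ga_c : γ * c = c * γ := ((hcC γ).symm)
  have c_ga_c' : ∀ x : A, γ * (c * x) = c * (γ * x) := fun x => by rw [← mul_assoc, c_ga_c, mul_assoc]
  have c_de_c : δ * c = c * δ := ((hcC δ).symm)
  have c_de_c' : ∀ x : A, δ * (c * x) = c * (δ * x) := fun x => by rw [← mul_assoc, c_de_c, mul_assoc]
  have c_id_d : ⅟d * d = d * ⅟d := ((hdC ⅟d).symm)
  have c_id_d' : ∀ x : A, ⅟d * (d * x) = d * (⅟d * x) := fun x => by rw [← mul_assoc, c_id_d, mul_assoc]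
  have c_al_d : α * d = d * α := ((hdC α).symm)
  have c_al_d' : ∀ x : A, α * (d * x) = d * (α * x) := fun x => by rw [← mul_assoc, c_al_d, mul_assoc]
  have c_be_d : β * d = d * β := ((hdC β).symm)
  have c_be_d' : ∀ x : A, β * (d * x) = d * (β * x) := fun x => by rw [← mul_assoc, c_be_d, mul_assoc]
  have c_ga_d : γ * d = d * γ := ((hdC γ).symm)
  have c_ga_d' : ∀ x : A, γ * (d * x) = d * (γ * x) := fun x => by rw [← mul_assoc, c_ga_d, mul_assoc]
  have c_de_d : δ * d = d * δ := ((hdC δ).symm)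
  have c_de_d' : ∀ x : A, δ * (d * x) = d * (δ * x) := fun x => by rw [← mul_assoc, c_de_d, mul_assoc]
  have c_al_id : α * ⅟d = ⅟d * α := ((hidC α).symm)
  have c_al_id' : ∀ x : A, α * (⅟d * x) = ⅟d * (α * x) := fun x => by rw [← mul_assoc, c_al_id, mul_assoc]
  have c_be_id : β * ⅟d = ⅟d * β := ((hidC β).symm)
  have c_be_id' : ∀ x : A, β * (⅟d * x) = ⅟d * (β * x) := fun x => by rw [← mul_assoc, c_be_id, mul_assoc]
  have c_ga_id : γ * ⅟d = ⅟d * γ := ((hidC γ).symm)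
  have c_ga_id' : ∀ x : A, γ * (⅟d * x) = ⅟d * (γ * x) := fun x => by rw [← mul_assoc, c_ga_id, mul_assoc]
  have c_de_id : δ * ⅟d = ⅟d * δ := ((hidC δ).symm)
  have c_de_id' : ∀ x : A, δ * (⅟d * x) = ⅟d * (δ * x) := fun x => by rw [← mul_assoc, c_de_id, mul_assoc]
  have k1 : b * ⅟b = (1:A) := mul_invOf_self b
  have k1' : ∀ x : A, b * (⅟b * x) = x := fun x => mul_invOf_cancel_left b x
  have k2 : d * ⅟d = (1:A) := mul_invOf_self d
  have k2' : ∀ x : A, d * (⅟d * x) = x := fun x => mul_invOf_cancel_left d x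
  have o_be_al : β * α = -(α * β) := by rw [← neg_neg (β * α), ← hαβ]
  have o_be_al' : ∀ x : A, β * (α * x) = -(α * (β * x)) := fun x => by rw [← mul_assoc, o_be_al, neg_mul, mul_assoc]
  have o_ga_al : γ * α = -(α * γ) := by rw [← neg_neg (γ * α), ← hαγ]
  have o_ga_al' : ∀ x : A, γ * (α * x) = -(α * (γ * x)) := fun x => by rw [← mul_assoc, o_ga_al, neg_mul, mul_assoc]
  have o_de_al : δ * α = -(α * δ) := by rw [← neg_neg (δ * α), ← hαδ]
  have o_de_al' : ∀ x : A, δ * (α * x) = -(α * (δ * x)) := fun x => by rw [← mul_assoc, o_de_al, neg_mul, mul_assoc]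
  have o_ga_be : γ * β = -(β * γ) := by rw [← neg_neg (γ * β), ← hβγ]
  have o_ga_be' : ∀ x : A, γ * (β * x) = -(β * (γ * x)) := fun x => by rw [← mul_assoc, o_ga_be, neg_mul, mul_assoc]
  have o_de_be : δ * β = -(β * δ) := by rw [← neg_neg (δ * β), ← hβδ]
  have o_de_be' : ∀ x : A, δ * (β * x) = -(β * (δ * x)) := fun x => by rw [← mul_assoc, o_de_be, neg_mul, mul_assoc]
  have o_de_ga : δ * γ = -(γ * δ) := by rw [← neg_neg (δ * γ), ← hγδ]
  have o_de_ga' : ∀ x : A, δ * (γ * x) = -(γ * (δ * x)) := fun x => by rw [← mul_assoc, o_de_ga, neg_mul, mul_assoc]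
  have s_al : α * α = (0:A) := hα
  have s_al' : ∀ x : A, α * (α * x) = 0 := fun x => by rw [← mul_assoc, s_al, zero_mul]
  have s_be : β * β = (0:A) := hβ
  have s_be' : ∀ x : A, β * (β * x) = 0 := fun x => by rw [← mul_assoc, s_be, zero_mul]
  have s_ga : γ * γ = (0:A) := hγ
  have s_ga' : ∀ x : A, γ * (γ * x) = 0 := fun x => by rw [← mul_assoc, s_ga, zero_mul]
  have s_de : δ * δ = (0:A) := hδ
  have s_de' : ∀ x : A, δ * (δ * x) = 0 := fun x => by rw [← mul_assoc, s_de, zero_mul]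
  have he : (β * γ + b * d) * (⅟b * ⅟d - ⅟b * (⅟b * (⅟d * (⅟d * (β * γ))))) = 1 := by
    simp only [mul_add, add_mul, mul_sub, sub_mul, mul_assoc, mul_one, one_mul, mul_zero, zero_mul, mul_neg, neg_mul, neg_neg, sub_eq_add_neg, neg_add_rev, c_b_a, c_b_a', c_ib_a, c_ib_a', c_c_a, c_c_a', c_d_a, c_d_a', c_id_a, c_id_a', c_al_a, c_al_a', c_be_a, c_be_a', c_ga_a, c_ga_a', c_de_a, c_de_a', c_ib_b, c_ib_b', c_c_b, c_c_b', c_d_b, c_d_b', c_id_b, c_id_b', c_al_b, c_al_b', c_be_b, c_be_b', c_ga_b, c_ga_b', c_de_b, c_de_b', c_c_ib, c_c_ib', c_d_ib, c_d_ib', c_id_ib, c_id_ib', c_al_ib, c_al_ib', c_be_ib, c_be_ib', c_ga_ib, c_ga_ib', c_de_ib, c_de_ib', c_d_c, c_d_c', c_id_c, c_id_c', c_al_c, c_al_c', c_be_c, c_be_c', c_ga_c, c_ga_c', c_de_c, c_de_c', c_id_d, c_id_d', c_al_d, c_al_d', c_be_d, c_be_d', c_ga_d, c_ga_d', c_de_d,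 c_de_d', c_al_id, c_al_id', c_be_id, c_be_id', c_ga_id, c_ga_id', c_de_id, c_de_id', k1, k1', k2, k2', o_be_al, o_be_al', o_ga_al, o_ga_al', o_de_al, o_de_al', o_ga_be, o_ga_be', o_de_be, o_de_be', o_de_ga, o_de_ga', s_al, s_al', s_be, s_be', s_ga, s_ga', s_de, s_de']
    abel
  have he' : (⅟b * ⅟d - ⅟b * (⅟b * (⅟d * (⅟d * (β * γ))))) * (β * γ + b * d) = 1 := by
    simp only [mul_add, add_mul, mul_sub, sub_mul, mul_assoc, mul_one, one_mul, mul_zero, zero_mul, mul_neg, neg_mul, neg_neg, sub_eq_add_neg, neg_add_rev, c_b_a, c_b_a', c_ib_a, c_ib_a', c_c_a, c_c_a', c_d_a, c_d_a', c_id_a, c_id_a', c_al_a, c_al_a', c_be_a, c_be_a', c_ga_a, c_ga_a', c_de_a, c_de_a', c_ib_b, c_ib_b', c_c_b, c_c_b', c_d_b, c_d_b', c_id_b, c_id_b', c_al_b, c_al_b', c_be_b, c_be_b', c_ga_b, c_ga_b', c_de_b, c_de_b', c_c_ib, c_c_ib', c_d_ib, c_d_ib', c_id_ib, c_id_ib',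 c_al_ib, c_al_ib', c_be_ib, c_be_ib', c_ga_ib, c_ga_ib', c_de_ib, c_de_ib', c_d_c, c_d_c', c_id_c, c_id_c', c_al_c, c_al_c', c_be_c, c_be_c', c_ga_c, c_ga_c', c_de_c, c_de_c', c_id_d, c_id_d', c_al_d, c_al_d', c_be_d, c_be_d', c_ga_d, c_ga_d', c_de_d, c_de_d', c_al_id, c_al_id', c_be_id, c_be_id', c_ga_id, c_ga_id', c_de_id, c_de_id', k1, k1', k2, k2', o_be_al, o_be_al', o_ga_al, o_ga_al', o_de_al, o_de_al', o_ga_be, o_ga_be', o_de_be, o_de_be', o_de_ga, o_de_ga', s_al, s_al', s_be, s_be', s_ga, s_ga', s_de, s_de']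
    abel
  have hinv : Invertible (β * γ + b * d) := ⟨_, he', he⟩
  have hrv : Ring.inverse (β * γ + b * d) = ⅟b * ⅟d - ⅟b * (⅟b * (⅟d * (⅟d * (β * γ)))) := by
    rw [@Ring.inverse_invertible _ _ _ hinv]
    exact @invOf_eq_right_inv _ _ _ _ hinv he
  rw [hrv]
  simp only [mul_add, add_mul, mul_sub, sub_mul, mul_assoc, mul_one, one_mul, mul_zero, zero_mul, mul_neg, neg_mul, neg_neg, sub_eq_add_neg, neg_add_rev, c_b_a, c_b_a', c_ib_a, c_ib_a', c_c_a, c_c_a', c_d_a, c_d_a', c_id_a, c_id_a', c_al_a, c_al_a', c_be_a, c_be_a', c_ga_a, c_ga_a', c_de_a, c_de_a', c_ib_b, c_ib_b', c_c_b, c_c_b', c_d_b, c_d_b', c_id_b, c_id_b', c_al_b, c_al_b', c_be_b, c_be_b', c_ga_b, c_ga_b', c_de_b, c_de_b', c_c_ib, c_c_ib', c_d_ib, c_d_ib', c_id_ib, c_id_ib', c_al_ib, c_al_ib', c_be_ib, c_be_ib', c_ga_ib, c_ga_ib', c_de_ib, c_de_ib', c_d_c, c_d_c', c_id_c, c_id_c',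 c_al_c, c_al_c', c_be_c, c_be_c', c_ga_c, c_ga_c', c_de_c, c_de_c', c_id_d, c_id_d', c_al_d, c_al_d', c_be_d, c_be_d', c_ga_d, c_ga_d', c_de_d, c_de_d', c_al_id, c_al_id', c_be_id, c_be_id', c_ga_id, c_ga_id', c_de_id, c_de_id', k1, k1', k2, k2', o_be_al, o_be_al', o_ga_al, o_ga_al', o_de_al, o_de_al', o_ga_be, o_ga_be', o_de_be, o_de_be', o_de_ga, o_de_ga', s_al, s_al', s_be, s_be', s_ga, s_ga', s_de, s_de']
  abel
end

section
/- Let M be an invertible n×n matrix over a field and fix 1 ≤ r < n. Let T be the n×n matrix whose j-th column, for 1 ≤ j ≤ r, is the (n−r+j)-th column of M⁻¹, and whose j-th column, for r+1 ≤ j ≤ n, is the standard basis vector e_j. Then det(T) equals the determinant of the r×r submatrix of M⁻¹ with rows 1,…,r and columns n−r+1,…,n, and det(MT) = (−1)^{r(n+1)} times the determinant of the (n−r)×(n−r) submatrix of M in rows 1,…,n−r and columns r+1,…,n. -/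
/-!
Both determinants are computed by the same observation: a matrix whose last columns are the
corresponding standard basis vectors has the determinant of its upper-left block. `T` is of
this form. In `M * T` the first `r` columns are `e_{n-r+1}, …, e_n` and the others are those of
`M`; rotating the columns cyclically by `r`, a permutation of sign `(-1)^{r(n-1)}`, moves the
basis vectors to the end, and the upper-left block is then the complementary minor of `M`.
-/

open Matrix Equiv

theorem Equiv.Perm.sign_finCycle {n : ℕ} (k : Fin n) :
    Perm.sign (finCycle k) = (-1) ^ ((n - 1) * k) := by
  rw [pow_mul, ← sign_finRotate, ← map_pow]
  congr 1
  exact DFunLike.coe_injective (finCycle_eq_finRotate_iterate.trans (Perm.iterate_eq_pow _ _))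

theorem Matrix.det_eq_det_submatrix_castLE_of_cols_eq_one {R : Type*} [CommRing R] {s n : ℕ}
    (h : s ≤ n) (B : Matrix (Fin n) (Fin n) R)
    (hB : ∀ i j : Fin n, s ≤ j → B i j = (1 : Matrix (Fin n) (Fin n) R) i j) :
    B.det = (B.submatrix (Fin.castLE h) (Fin.castLE h)).det := by
  obtain ⟨t, rfl⟩ := Nat.exists_eq_add_of_le h
  have hblocks : B.submatrix finSumFinEquiv finSumFinEquiv =
      fromBlocks (B.submatrix (Fin.castLE h) (Fin.castLE h)) 0
        (B.submatrix (Fin.natAdd s) (Fin.castAdd t)) 1 := by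
    ext (i | i) (j | j)
    · rfl
    · have hij : (i : ℕ) ≠ s + j := by omega
      simp [hB, Fin.ext_iff, hij]
    · rfl
    · simp [hB, one_apply, Fin.ext_iff]
  rw [← det_submatrix_equiv_self finSumFinEquiv, hblocks, det_fromBlocks_zero₁₂, det_one,
    mul_one]

theorem Matrix.det_eq_neg_one_pow_mul_det_submatrix_of_cols_eq_one {R : Type*} [CommRing R]
    {n r : ℕ} (hrn : r < n) (A : Matrix (Fin n) (Fin n) R)
    (hA : ∀ i j : Fin n, (j : ℕ) < r → A i j = if (i : ℕ) = n - r + j then 1 else 0) :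
    A.det = (-1) ^ (r * (n + 1)) *
      (A.submatrix (Fin.castLE (Nat.sub_le n r))
        (fun j : Fin (n - r) => ⟨r + j, Nat.add_lt_of_lt_sub' j.isLt⟩)).det := by
  set ρ := finCycle (⟨r, hrn⟩ : Fin n)
  have hρ_low : ∀ j : Fin n, (j : ℕ) < n - r → (ρ j : ℕ) = j + r := fun j hj => by
    rw [finCycle_apply, Fin.val_add_eq_ite, if_neg (by simp; omega)]
  have hρ_high : ∀ j : Fin n, n - r ≤ j → (ρ j : ℕ) = j + r - n := fun j hj => by
    rw [finCycle_apply, Fin.val_add_eq_ite, if_pos (by simp; omega)]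
  have hcols : ∀ i j : Fin n, n - r ≤ j →
      A.submatrix id ρ i j = (1 : Matrix (Fin n) (Fin n) R) i j := by
    intro i j hj
    have hρj := hρ_high j hj
    rw [submatrix_apply, id_eq, hA _ _ (by omega), hρj, one_apply,
      show n - r + (j + r - n) = j by omega]
    simp only [Fin.val_inj]
  have htopLeft : (A.submatrix id ρ).submatrix (Fin.castLE (Nat.sub_le n r))
      (Fin.castLE (Nat.sub_le n r)) = A.submatrix (Fin.castLE (Nat.sub_le n r))
        (fun j : Fin (n - r) => ⟨r + j, Nat.add_lt_of_lt_sub' j.isLt⟩) := by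
    ext i j
    have hρj := hρ_low (Fin.castLE (Nat.sub_le n r) j) j.isLt
    simp only [submatrix_apply, id_eq]
    congr 2
    ext
    simp only [hρj, Fin.val_castLE]
    omega
  have hsign : (Perm.sign ρ : R) = (-1) ^ (r * (n + 1)) := by
    have hexp : r * (n + 1) = (n - 1) * r + 2 * r := by
      obtain ⟨m, rfl⟩ : ∃ m, n = m + 1 := ⟨n - 1, by omega⟩
      simp only [Nat.add_sub_cancel]
      ring
    rw [Perm.sign_finCycle, hexp, pow_add, pow_mul _ 2]
    simp
  rw [← htopLeft, ← det_eq_det_submatrix_castLE_of_cols_eq_one (Nat.sub_le n r) _ hcols,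
    det_permute', ← hsign, ← mul_assoc, ← Int.cast_mul, ← Units.val_mul, Int.units_mul_self,
    Units.val_one, Int.cast_one, one_mul]

/-- The key construction in the proof of the Jacobi complementary minor theorem:
for the matrix `T` whose first `r` columns are the last `r` columns of `M⁻¹` and whose
remaining columns are standard basis vectors, `det T` is the corresponding minor of
`M⁻¹`, and `det (M T) = (−1)^{r(n+1)}` times the complementary minor of `M`. -/
theorem jacobi_key_construction {k : Type*} [Field k] {n r : ℕ}
    (hrn : r < n)
    (M : Matrix (Fin n) (Fin n) k) (hM : IsUnit M.det)
    (T : Matrix (Fin n) (Fin n) k)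
    (hT : ∀ i j : Fin n, T i j =
      if h : (j : ℕ) < r then M⁻¹ i ⟨n - r + (j : ℕ), by omega⟩
      else if i = j then 1 else 0) :
    T.det = ((M⁻¹).submatrix
        (fun i : Fin r => (⟨(i : ℕ), by have := i.isLt; omega⟩ : Fin n))
        (fun j : Fin r => (⟨n - r + (j : ℕ), by have := j.isLt; omega⟩ : Fin n))).det ∧
      (M * T).det = (-1 : k) ^ (r * (n + 1)) *
        (M.submatrix
          (fun i : Fin (n - r) => (⟨(i : ℕ), by have := i.isLt; omega⟩ : Fin n))
          (fun j : Fin (n - r) => (⟨r + (j : ℕ), by have := j.isLt; omega⟩ : Fin n))).det := by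
  have hT_high : ∀ i j : Fin n, r ≤ j → T i j = (1 : Matrix (Fin n) (Fin n) k) i j :=
    fun i j hj => by rw [hT, dif_neg (not_lt.2 hj), one_apply]
  have hMT_low : ∀ i j : Fin n, (j : ℕ) < r →
      (M * T) i j = if (i : ℕ) = n - r + j then 1 else 0 := fun i j hj => by
    have hcol : n - r + j < n := by omega
    calc (M * T) i j = (M * M⁻¹) i ⟨n - r + j, hcol⟩ := by
          simp only [mul_apply, hT, dif_pos hj]
      _ = _ := by simp only [mul_nonsing_inv M hM, one_apply, Fin.ext_iff]
  have hMT_high : ∀ i j : Fin n, r ≤ j → (M * T) i j = M i j := fun i j hj => by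
    simp [mul_apply, hT_high _ _ hj, one_apply]
  refine ⟨?_, ?_⟩
  · rw [det_eq_det_submatrix_castLE_of_cols_eq_one hrn.le T hT_high]
    congr 1
    ext i j
    exact (hT _ _).trans (dif_pos j.isLt)
  · rw [det_eq_neg_one_pow_mul_det_submatrix_of_cols_eq_one hrn _ hMT_low]
    congr 2
    ext i j
    exact hMT_high _ _ (Nat.le_add_right r j)
end

section
/- Let M be an r×p matrix over a field (r ≤ p) whose leading r×r minor X_{1⋯r} is nonzero. Then M = Ñ·B, where Ñ ∈ SL_r(k) is the matrix obtained from the first r columns of M by dividing the first column by X_{1⋯r}, and every entry B_{ij} of B is expressible as a ratio of maximal minors of M: B_{1j} = X_{j 2 ⋯ r} and B_{ij} = X_{1⋯(i−1) j (i+1)⋯ r} / X_{1⋯r} for i > 1. -/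
/-- Decomposition underlying the First Fundamental Theorem for `SL_r`: if the leading
`r × r` minor of `M` is nonzero, then `M = Ñ · B`, where `Ñ` has determinant `1` and
the entries of `B` are ratios of maximal minors of `M`. -/
theorem fft_decomposition {k : Type*} [Field k] {r p : ℕ} (hr : 0 < r) (hrp : r ≤ p)
    (M : Matrix (Fin r) (Fin p) k)
    (X : (Fin r → Fin p) → k) (hX : ∀ c, X c = (M.submatrix id c).det)
    (base : Fin r → Fin p) (hbase : ∀ t, base t = Fin.castLE hrp t)
    (hX0 : X base ≠ 0)
    (N : Matrix (Fin r) (Fin r) k)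
    (hN : ∀ a t, N a t =
      if t = (⟨0, hr⟩ : Fin r) then M a (base t) / X base else M a (base t))
    (B : Matrix (Fin r) (Fin p) k)
    (hB : ∀ a j', B a j' =
      if a = (⟨0, hr⟩ : Fin r) then X (Function.update base (⟨0, hr⟩ : Fin r) j')
      else X (Function.update base a j') / X base) :
    N.det = 1 ∧ M = N * B := by
  set A := M.submatrix id base with hAdef
  have hA : X base = A.det := hX base
  have hupd : ∀ (t : Fin r) (j : Fin p),
      A.updateCol t (fun i => M i j) = M.submatrix id (Function.update base t j) := by
    intro t j
    ext i s
    by_cases hs : s = t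
    · subst hs; simp [Matrix.updateCol_self]
    · simp [Matrix.updateCol_ne hs, Function.update_of_ne hs, hAdef]
  constructor
  · have hNA : N = A.updateCol ⟨0, hr⟩ ((X base)⁻¹ • fun a => A a ⟨0, hr⟩) := by
      ext a t
      rw [hN]
      by_cases ht : t = ⟨0, hr⟩
      · subst ht
        simp [Matrix.updateCol_self, div_eq_inv_mul, hAdef]
      · simp [ht, Matrix.updateCol_ne ht, hAdef]
    rw [hNA, Matrix.det_updateCol_smul, Matrix.updateCol_eq_self, ← hA,
      inv_mul_cancel₀ hX0]
  · ext a j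
    rw [Matrix.mul_apply]
    symm
    have hsum : ∀ t : Fin r, N a t * B t j =
        M a (base t) * (M.submatrix id (Function.update base t j)).det / X base := by
      intro t
      rw [hN, hB]
      by_cases ht : t = ⟨0, hr⟩
      · subst ht
        rw [if_pos rfl, if_pos rfl]
        simp only [hX]
        rw [div_mul_eq_mul_div]
      · rw [if_neg ht, if_neg ht]
        simp only [hX]
        rw [mul_div_assoc]
    calc (∑ t, N a t * B t j)
        = (∑ t, M a (base t) * (M.submatrix id (Function.update base t j)).det) / X base := by
          rw [Finset.sum_div]; exact Finset.sum_congr rfl fun t _ => hsum t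
      _ = (A.mulVec (Matrix.cramer A (fun i => M i j))) a / X base := by
          congr 1
          rw [Matrix.mulVec]
          simp only [dotProduct, Matrix.cramer_apply, hupd]
          rfl
      _ = M a j := by
          rw [Matrix.mulVec_cramer]
          simp only [Pi.smul_apply, smul_eq_mul, ← hA]
          field_simp
end
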